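/- arXiv:1012.3069 — 2 statements merged into one kernel-verified Lean document; each statement's English description precedes it below -/
import Mathlib

section
/- Let u : ℝ^N → ℝ be upper semicontinuous and bounded above, and let φ ∈ C²(ℝ^N) be such that u - φ attains a global maximum at a point x̂ with u(x̂) = φ(x̂). Then there exists a sequence of C² functions φₙ : ℝ^N → ℝ such that for every n: u(x) ≤ φₙ₊₁(x) ≤ φₙ(x) ≤ φ(x) for all x; u - φₙ attains a global maximum at x̂ with u(x̂) = φₙ(x̂); ∇φₙ(x̂) = ∇φ(x̂) and ∇²φₙ(x̂) = ∇²φ(x̂); and φₙ(x) converges pointwise to u(x) as n → ∞ at every x ∈ ℝ^N. -/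
open Filter Set
open scoped Manifold NNReal

private lemma expNegInvGlue_mono : Monotone expNegInvGlue := by
  intro a b hab
  unfold expNegInvGlue
  rcases le_or_gt a 0 with ha | ha
  · rw [if_pos ha]
    split_ifs with hb
    · exact le_refl _
    · exact (Real.exp_pos _).le
  · rw [if_neg (not_le.2 ha), if_neg (not_le.2 (ha.trans_le hab))]
    exact Real.exp_le_exp.2 (neg_le_neg (inv_anti₀ ha hab))

private lemma smoothTransition_mono : Monotone Real.smoothTransition := by
  intro a b hab
  unfold Real.smoothTransition
  rw [div_le_div_iff₀ (Real.smoothTransition.pos_denom a) (Real.smoothTransition.pos_denom b)]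
  have h1 := expNegInvGlue_mono hab
  have h2 := expNegInvGlue_mono (by linarith : 1 - b ≤ 1 - a)
  nlinarith [expNegInvGlue.nonneg a, expNegInvGlue.nonneg b, expNegInvGlue.nonneg (1-a),
    expNegInvGlue.nonneg (1-b)]

private lemma exists_smooth_between {N : ℕ} (a b : EuclideanSpace ℝ (Fin N) → ℝ)
    (ha : Continuous a) (hb : Continuous b) (hab : ∀ x, a x < b x) :
    ∃ h : EuclideanSpace ℝ (Fin N) → ℝ, ContDiff ℝ 2 h ∧ ∀ x, a x < h x ∧ h x < b x := by
  obtain ⟨h, hh⟩ := exists_contMDiffMap_forall_mem_convex_of_local_const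
    (𝓘(ℝ, EuclideanSpace ℝ (Fin N))) (n := (⊤ : ℕ∞)) (t := fun x => Set.Ioo (a x) (b x))
    (fun x => convex_Ioo _ _) (fun x => ⟨(a x + b x)/2, by
      filter_upwards [(ha.continuousAt).eventually_lt continuousAt_const
          (by linarith [hab x] : a x < (a x + b x)/2),
        continuousAt_const.eventually_lt (hb.continuousAt)
          (by linarith [hab x] : (a x + b x)/2 < b x)] with y h1 h2
      exact ⟨h1, h2⟩⟩)
  exact ⟨h, (contMDiff_iff_contDiff.1 h.contMDiff).of_le (WithTop.coe_le_coe.2 le_top),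
    fun x => ⟨(hh x).1, (hh x).2⟩⟩

private lemma lsc_approx {α : Type*} [MetricSpace α] [Nonempty α]
    (g : α → ℝ) (hg : LowerSemicontinuous g) (hg0 : ∀ x, 0 ≤ g x) :
    ∃ gL : ℕ → α → ℝ, (∀ n, Continuous (gL n)) ∧ (∀ n x, 0 ≤ gL n x) ∧
      (∀ n x, gL n x ≤ g x) ∧ (∀ n x, gL n x ≤ gL (n+1) x) ∧
      (∀ x, Tendsto (fun n => gL n x) atTop (nhds (g x))) := by
  set gL : ℕ → α → ℝ := fun n x => ⨅ y, (g y + (n+1 : ℝ) * dist x y) with hgL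
  have hbdd : ∀ (n : ℕ) (x : α), BddBelow (Set.range fun y => g y + (n+1 : ℝ) * dist x y) := by
    intro n x
    refine ⟨0, ?_⟩
    rintro v ⟨y, rfl⟩
    have h1 := hg0 y
    have h2 : (0:ℝ) ≤ ((n:ℝ)+1) * dist x y := by positivity
    show (0:ℝ) ≤ g y + ((n:ℝ)+1) * dist x y
    linarith
  have hle : ∀ n x, gL n x ≤ g x := by
    intro n x
    have := ciInf_le (hbdd n x) x
    simpa using this
  have hnn : ∀ n x, 0 ≤ gL n x := by
    intro n x
    refine le_ciInf fun y => ?_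
    have := hg0 y
    positivity
  have hmono : ∀ n x, gL n x ≤ gL (n+1) x := by
    intro n x
    refine ciInf_mono (hbdd n x) fun y => ?_
    have : ((n:ℝ)+1) ≤ ((n:ℝ)+1+1) := by linarith
    push_cast
    nlinarith [dist_nonneg (x := x) (y := y)]
  have hlip : ∀ n (x x' : α), gL n x ≤ gL n x' + (n+1 : ℝ) * dist x x' := by
    intro n x x'
    rw [← sub_le_iff_le_add]
    refine le_ciInf fun y => ?_
    rw [sub_le_iff_le_add]
    calc gL n x ≤ g y + (n+1 : ℝ) * dist x y := ciInf_le (hbdd n x) y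
      _ ≤ g y + (n+1 : ℝ) * (dist x' y + dist x x') := by
          have := dist_triangle x x' y
          have h1 : (0:ℝ) ≤ (n+1:ℝ) := by positivity
          nlinarith
      _ = g y + (n+1 : ℝ) * dist x' y + (n+1 : ℝ) * dist x x' := by ring
  have hcont : ∀ n, Continuous (gL n) := by
    intro n
    refine LipschitzWith.continuous (K := (n:ℝ≥0)+1) ?_
    refine LipschitzWith.of_dist_le_mul fun x x' => ?_
    have hK : ((((n:ℝ≥0)+1) : ℝ≥0) : ℝ) = (n:ℝ)+1 := by push_cast; ring
    rw [hK, Real.dist_eq, abs_le]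
    have h1 := hlip n x x'
    have h2 := hlip n x' x
    rw [dist_comm x' x] at h2
    constructor <;> [linarith; linarith]
  refine ⟨gL, hcont, hnn, hle, hmono, ?_⟩
  intro x
  rw [Metric.tendsto_atTop]
  intro ε hε
  obtain ⟨δ, hδpos, hδ⟩ : ∃ δ > 0, ∀ y, dist y x < δ → g x - ε/2 < g y := by
    rcases lt_or_ge 0 (g x) with hgx | hgx
    · have := hg x (g x - ε/2) (by linarith)
      rcases Metric.eventually_nhds_iff_ball.1 this with ⟨δ, hδpos, hδ⟩
      exact ⟨δ, hδpos, fun y hy => hδ y (by simpa [Metric.mem_ball] using hy)⟩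
    · exact ⟨1, one_pos, fun y _ => by have := hg0 y; linarith⟩
  obtain ⟨M, hM⟩ := exists_nat_ge (g x / δ)
  refine ⟨M, fun n hn => ?_⟩
  have hlow : g x - ε/2 ≤ gL n x := by
    refine le_ciInf fun y => ?_
    rcases lt_or_ge (dist y x) δ with hy | hy
    · have := hδ y hy
      have : (0:ℝ) ≤ (n+1:ℝ) * dist x y := by positivity
      linarith [hδ y hy]
    · have h1 : (n+1 : ℝ) * dist x y ≥ g x := by
        have hnM : (M:ℝ) ≤ (n:ℝ) := by exact_mod_cast hn
        have : g x ≤ (M:ℝ) * δ := by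
          rw [div_le_iff₀ hδpos] at hM
          linarith
        have h2 : δ ≤ dist x y := by rwa [dist_comm]
        nlinarith [hg0 x]
      have := hg0 y
      linarith
  have hup := hle n x
  rw [Real.dist_eq, abs_lt]
  constructor <;> linarith

theorem stmt_7 (N : ℕ) (u : EuclideanSpace ℝ (Fin N) → ℝ)
    (husc : UpperSemicontinuous u) (hbdd : BddAbove (Set.range u))
    (φ : EuclideanSpace ℝ (Fin N) → ℝ) (hφ : ContDiff ℝ 2 φ)
    (xh : EuclideanSpace ℝ (Fin N))
    (hmax : ∀ x, u x - φ x ≤ u xh - φ xh) (htouch : u xh = φ xh) :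
    ∃ φn : ℕ → EuclideanSpace ℝ (Fin N) → ℝ,
      (∀ n, ContDiff ℝ 2 (φn n)) ∧
      (∀ n x, u x ≤ φn (n + 1) x ∧ φn (n + 1) x ≤ φn n x ∧ φn n x ≤ φ x) ∧
      (∀ n, φn n xh = u xh) ∧
      (∀ n x, u x - φn n x ≤ u xh - φn n xh) ∧
      (∀ n, fderiv ℝ (φn n) xh = fderiv ℝ φ xh) ∧
      (∀ n, iteratedFDeriv ℝ 2 (φn n) xh = iteratedFDeriv ℝ 2 φ xh) ∧
      (∀ x, Tendsto (fun n => φn n x) atTop (nhds (u x))) := by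
  classical
  set θ := Real.smoothTransition with hθdef
  have hθcd : ContDiff ℝ 2 θ := Real.smoothTransition.contDiff
  have hθ01 : ∀ t, 0 ≤ θ t ∧ θ t ≤ 1 := fun t =>
    ⟨Real.smoothTransition.nonneg t, Real.smoothTransition.le_one t⟩
  have hθ1 : ∀ t, 1 ≤ t → θ t = 1 := fun t ht => Real.smoothTransition.one_of_one_le ht
  have hθ0 : ∀ t, t ≤ 0 → θ t = 0 := fun t ht => Real.smoothTransition.zero_of_nonpos ht
  have hθmono : Monotone θ := smoothTransition_mono
  -- the gap function g = φ - u
  set g : EuclideanSpace ℝ (Fin N) → ℝ := fun x => φ x - u x with hgdef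
  have htouch0 : g xh = 0 := by simp [hgdef, ← htouch]
  have hg0 : ∀ x, 0 ≤ g x := by
    intro x
    have h1 := hmax x
    simp only [hgdef]
    linarith [htouch.le, htouch.ge, hmax x]
  have hglsc : LowerSemicontinuous g := by
    intro x c hc
    have hcg : c < φ x - u x := hc
    have h1 : ∀ᶠ y in nhds x, u y < u x + (φ x - u x - c)/2 :=
      husc x (u x + (φ x - u x - c)/2) (by linarith)
    have h2 : ∀ᶠ y in nhds x, φ x - (φ x - u x - c)/2 < φ y :=
      continuousAt_const.eventually_lt (hφ.continuous.continuousAt) (by linarith)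
    filter_upwards [h1, h2] with y hy1 hy2
    show c < φ y - u y
    linarith
  obtain ⟨gL, hgLcont, hgLnn, hgLle, hgLmono, hgLtend⟩ := lsc_approx g hglsc hg0
  -- the scale sequence
  set ε : ℕ → ℝ := fun n => 1 / ((n:ℝ) + 1) with hεdef
  have hεpos : ∀ n, 0 < ε n := fun n => by positivity
  have hεanti : ∀ n, ε (n+1) ≤ ε n := by
    intro n
    apply one_div_le_one_div_of_le
    · positivity
    · push_cast; linarith
  have hεtend : Tendsto ε atTop (nhds 0) := tendsto_one_div_add_atTop_nhds_zero_nat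
  -- the smooth positive-part-like function
  set sfun : ℝ → ℝ → ℝ := fun e t => t * θ (t / e) with hsfun
  have hs0 : ∀ e t, 0 < e → t ≤ 0 → sfun e t = 0 := by
    intro e t he ht
    simp only [hsfun]
    rw [hθ0 _ (by exact div_nonpos_iff.2 (Or.inr ⟨ht, he.le⟩) : t / e ≤ 0)]
    ring
  have hsnn : ∀ e t, 0 < e → 0 ≤ sfun e t := by
    intro e t he
    rcases le_or_gt t 0 with ht | ht
    · rw [hs0 e t he ht]
    · exact mul_nonneg ht.le (hθ01 _).1
  have hsle : ∀ e t, 0 < e → sfun e t ≤ max t 0 := by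
    intro e t he
    rcases le_or_gt t 0 with ht | ht
    · rw [hs0 e t he ht]; exact le_max_right _ _
    · refine le_trans ?_ (le_max_left _ _)
      calc t * θ (t / e) ≤ t * 1 := mul_le_mul_of_nonneg_left (hθ01 _).2 ht.le
        _ = t := mul_one t
  have hsge : ∀ e t, 0 < e → t - e ≤ sfun e t := by
    intro e t he
    rcases le_or_gt e t with ht | ht
    · have h1 : (1:ℝ) ≤ t / e := (one_le_div he).2 ht
      simp only [hsfun]
      rw [hθ1 _ h1]
      linarith
    · have := hsnn e t he
      linarith
  have hsmono : ∀ e, 0 < e → ∀ a b, a ≤ b → sfun e a ≤ sfun e b := by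
    intro e he a b hab
    rcases le_or_gt a 0 with ha | ha
    · rw [hs0 e a he ha]; exact hsnn e b he
    · simp only [hsfun]
      exact mul_le_mul hab (hθmono ((div_le_div_iff_of_pos_right he).2 hab)) (hθ01 _).1
        (le_trans ha.le hab)
  have hsanti : ∀ e e' t, 0 < e' → e' ≤ e → sfun e t ≤ sfun e' t := by
    intro e e' t he' hee
    have he : 0 < e := lt_of_lt_of_le he' hee
    rcases le_or_gt t 0 with ht | ht
    · rw [hs0 e t he ht, hs0 e' t he' ht]
    · simp only [hsfun]
      refine mul_le_mul_of_nonneg_left (hθmono ?_) ht.le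
      exact div_le_div_of_nonneg_left ht.le he' hee
  -- recursive construction of the smooth minorants
  set P : ℕ → (EuclideanSpace ℝ (Fin N) → ℝ) → Prop :=
    fun n f => ContDiff ℝ 2 f ∧ ∀ x, gL n x - 2 * ε n < f x ∧ f x < gL n x with hP
  have base : ∃ f, P 0 f := by
    obtain ⟨f, hf1, hf2⟩ := exists_smooth_between (fun x => gL 0 x - 2 * ε 0) (gL 0)
      ((hgLcont 0).sub continuous_const) (hgLcont 0)
      (fun x => by show gL 0 x - 2 * ε 0 < gL 0 x; have := hεpos 0; linarith)
    exact ⟨f, hf1, hf2⟩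
  have step : ∀ n (f : {f : EuclideanSpace ℝ (Fin N) → ℝ // P n f}),
      ∃ f' : {f : EuclideanSpace ℝ (Fin N) → ℝ // P (n+1) f}, ∀ x, f.1 x ≤ f'.1 x := by
    rintro n ⟨f, hfcd, hf⟩
    obtain ⟨f', hcd', hf'⟩ := exists_smooth_between
      (fun x => max (f x) (gL (n+1) x - 2 * ε (n+1))) (gL (n+1))
      (Continuous.max hfcd.continuous ((hgLcont (n+1)).sub continuous_const)) (hgLcont (n+1))
      (fun x => by
        show max (f x) (gL (n+1) x - 2 * ε (n+1)) < gL (n+1) x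
        exact max_lt (lt_of_lt_of_le (hf x).2 (hgLmono n x))
          (by have := hεpos (n+1); linarith))
    exact ⟨⟨f', hcd', fun x => ⟨lt_of_le_of_lt (le_max_right _ _) (hf' x).1, (hf' x).2⟩⟩,
      fun x => le_of_lt (lt_of_le_of_lt (le_max_left _ _) (hf' x).1)⟩
  choose stepF stepLe using step
  obtain ⟨f0, hf0⟩ := base
  let H : ∀ n, {f : EuclideanSpace ℝ (Fin N) → ℝ // P n f} :=
    fun n => Nat.rec ⟨f0, hf0⟩ (fun k ih => stepF k ih) n
  set h : ℕ → EuclideanSpace ℝ (Fin N) → ℝ := fun n => (H n).1 with hhdef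
  have hhP : ∀ n, P n (h n) := fun n => (H n).2
  have hchain : ∀ n x, h n x ≤ h (n+1) x := fun n => stepLe n (H n)
  have hhcd : ∀ n, ContDiff ℝ 2 (h n) := fun n => (hhP n).1
  have hhlt : ∀ n x, h n x < gL n x := fun n x => ((hhP n).2 x).2
  have hhgt : ∀ n x, gL n x - 2 * ε n < h n x := fun n x => ((hhP n).2 x).1
  -- spatial cutoff vanishing near xh
  set q : EuclideanSpace ℝ (Fin N) → ℝ := fun x => ‖x - xh‖^2 with hqdef
  have hqcd : ContDiff ℝ 2 q := (contDiff_norm_sq ℝ).comp (contDiff_id.sub contDiff_const)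
  have hq0 : ∀ x, 0 ≤ q x := fun x => sq_nonneg _
  have hqxh : q xh = 0 := by simp [hqdef]
  have hqpos : ∀ x, x ≠ xh → 0 < q x := by
    intro x hx
    have h1 : x - xh ≠ 0 := sub_ne_zero.2 hx
    have h2 : 0 < ‖x - xh‖ := norm_pos_iff.2 h1
    positivity
  set χ : ℕ → EuclideanSpace ℝ (Fin N) → ℝ :=
    fun n x => 1 - θ (2 - ((n:ℝ)+1) * q x) with hχdef
  have hχcd : ∀ n, ContDiff ℝ 2 (χ n) :=
    fun n => contDiff_const.sub (hθcd.comp (contDiff_const.sub (contDiff_const.mul hqcd)))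
  have hχnn : ∀ n x, 0 ≤ χ n x := fun n x => by
    simp only [hχdef]; linarith [(hθ01 (2 - ((n:ℝ)+1) * q x)).2]
  have hχle1 : ∀ n x, χ n x ≤ 1 := fun n x => by
    simp only [hχdef]; linarith [(hθ01 (2 - ((n:ℝ)+1) * q x)).1]
  have hχmono : ∀ n x, χ n x ≤ χ (n+1) x := by
    intro n x
    simp only [hχdef]
    have h1 : (2 - (((n+1:ℕ):ℝ)+1) * q x) ≤ (2 - ((n:ℝ)+1) * q x) := by
      push_cast
      nlinarith [hq0 x]
    have := hθmono h1
    linarith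
  have hχ0 : ∀ n x, q x < ε n → χ n x = 0 := by
    intro n x hx
    have hpos : (0:ℝ) < (n:ℝ)+1 := by positivity
    have h2 : ((n:ℝ)+1) * q x < 1 := by
      rw [hεdef] at hx
      have := (lt_div_iff₀ hpos).1 hx
      linarith
    have h1 : 1 ≤ 2 - ((n:ℝ)+1) * q x := by linarith
    simp only [hχdef, hθ1 _ h1]
    ring
  have hχ1 : ∀ (n : ℕ) x, 2 ≤ ((n:ℝ)+1) * q x → χ n x = 1 := by
    intro n x hx
    have h1 : 2 - ((n:ℝ)+1) * q x ≤ 0 := by linarith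
    simp only [hχdef, hθ0 _ h1]
    ring
  -- the correction ψ and the final sequence
  set ψ : ℕ → EuclideanSpace ℝ (Fin N) → ℝ :=
    fun n x => χ n x * sfun (ε n) (h n x) with hψdef
  have hψcd : ∀ n, ContDiff ℝ 2 (ψ n) := by
    intro n
    refine (hχcd n).mul ?_
    simp only [hsfun]
    exact (hhcd n).mul (hθcd.comp ((hhcd n).div_const _))
  have hψnn : ∀ n x, 0 ≤ ψ n x := fun n x => mul_nonneg (hχnn n x) (hsnn _ _ (hεpos n))
  have hψle : ∀ n x, ψ n x ≤ g x := by
    intro n x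
    calc ψ n x ≤ sfun (ε n) (h n x) := mul_le_of_le_one_left (hsnn _ _ (hεpos n)) (hχle1 n x)
      _ ≤ max (h n x) 0 := hsle _ _ (hεpos n)
      _ ≤ g x := max_le (le_trans (hhlt n x).le (hgLle n x)) (hg0 x)
  have hψmono : ∀ n x, ψ n x ≤ ψ (n+1) x := by
    intro n x
    refine mul_le_mul (hχmono n x) ?_ (hsnn _ _ (hεpos n)) (hχnn (n+1) x)
    calc sfun (ε n) (h n x) ≤ sfun (ε (n+1)) (h n x) := hsanti _ _ _ (hεpos (n+1)) (hεanti n)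
      _ ≤ sfun (ε (n+1)) (h (n+1) x) := hsmono _ (hεpos (n+1)) _ _ (hchain n x)
  have hψxh : ∀ n, ψ n xh = 0 := by
    intro n
    have h1 : χ n xh = 0 := hχ0 n xh (by rw [hqxh]; exact hεpos n)
    simp only [hψdef, h1, zero_mul]
  have hψtend : ∀ x, Tendsto (fun n => ψ n x) atTop (nhds (g x)) := by
    intro x
    rcases eq_or_ne x xh with rfl | hx
    · rw [htouch0]
      have h1 : (fun n => ψ n x) = fun _ => (0:ℝ) := funext fun n => hψxh n
      rw [h1]
      exact tendsto_const_nhds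
    · obtain ⟨M, hM⟩ := exists_nat_ge (2 / q x)
      have hq := hqpos x hx
      have hev : ∀ n, M ≤ n → χ n x = 1 := by
        intro n hn
        apply hχ1
        have h1 : (M:ℝ) ≤ (n:ℝ) := by exact_mod_cast hn
        rw [div_le_iff₀ hq] at hM
        nlinarith
      refine tendsto_of_tendsto_of_tendsto_of_le_of_le'
        (g := fun n => gL n x - 3 * ε n) (h := fun _ => g x) ?_ tendsto_const_nhds ?_ ?_
      · have h0 := (hgLtend x).sub (hεtend.const_mul 3)
        rw [mul_zero, sub_zero] at h0
        exact h0
      · rw [eventually_atTop]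
        refine ⟨M, fun n hn => ?_⟩
        show gL n x - 3 * ε n ≤ ψ n x
        have h1 : ψ n x = sfun (ε n) (h n x) := by
          simp only [hψdef, hev n hn, one_mul]
        rw [h1]
        have h2 := hsge (ε n) (h n x) (hεpos n)
        have h3 := hhgt n x
        linarith
      · exact Eventually.of_forall fun n => hψle n x
  -- assembling the sequence
  refine ⟨fun n x => φ x - ψ n x, fun n => hφ.sub (hψcd n), ?_, ?_, ?_, ?_, ?_, ?_⟩
  · intro n x
    show u x ≤ φ x - ψ (n+1) x ∧ φ x - ψ (n+1) x ≤ φ x - ψ n x ∧ φ x - ψ n x ≤ φ x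
    have h1 := hψle (n+1) x
    have h2 := hψmono n x
    have h3 := hψnn n x
    simp only [hgdef] at h1
    exact ⟨by linarith, by linarith, by linarith⟩
  · intro n
    show φ xh - ψ n xh = u xh
    rw [hψxh n, htouch]
    ring
  · intro n x
    show u x - (φ x - ψ n x) ≤ u xh - (φ xh - ψ n xh)
    have h1 := hψle n x
    have h2 := hψxh n
    simp only [hgdef] at h1
    rw [h2]
    linarith [htouch.le, htouch.ge]
  · intro n
    have hev : (fun x => φ x - ψ n x) =ᶠ[nhds xh] φ := by
      refine Filter.eventuallyEq_of_mem
        ((isOpen_lt hqcd.continuous continuous_const).mem_nhds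
          (by rw [Set.mem_setOf_eq, hqxh]; exact hεpos n) :
          {x | q x < ε n} ∈ nhds xh) fun x hx => ?_
      have h1 : χ n x = 0 := hχ0 n x hx
      have h2 : ψ n x = 0 := by simp only [hψdef, h1, zero_mul]
      simp [h2]
    exact hev.fderiv_eq
  · intro n
    have hUopen : IsOpen {x : EuclideanSpace ℝ (Fin N) | q x < ε n} :=
      isOpen_lt hqcd.continuous continuous_const
    have hxU : xh ∈ {x : EuclideanSpace ℝ (Fin N) | q x < ε n} := by
      rw [Set.mem_setOf_eq, hqxh]; exact hεpos n
    have hEq : Set.EqOn (fun x => φ x - ψ n x) φ {x : EuclideanSpace ℝ (Fin N) | q x < ε n} := by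
      intro x hx
      have h1 : χ n x = 0 := hχ0 n x hx
      have h2 : ψ n x = 0 := by simp only [hψdef, h1, zero_mul]
      simp [h2]
    calc iteratedFDeriv ℝ 2 (fun x => φ x - ψ n x) xh
        = iteratedFDerivWithin ℝ 2 (fun x => φ x - ψ n x) {x | q x < ε n} xh :=
          (iteratedFDerivWithin_of_isOpen 2 hUopen hxU).symm
      _ = iteratedFDerivWithin ℝ 2 φ {x | q x < ε n} xh :=
          iteratedFDerivWithin_congr hEq hxU 2
      _ = iteratedFDeriv ℝ 2 φ xh := iteratedFDerivWithin_of_isOpen 2 hUopen hxU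
  · intro x
    show Tendsto (fun n => φ x - ψ n x) atTop (nhds (u x))
    have h1 : Tendsto (fun n => φ x - ψ n x) atTop (nhds (φ x - g x)) :=
      (hψtend x).const_sub (φ x)
    have h2 : φ x - g x = u x := by simp [hgdef]
    rwa [h2] at h1
end

section
/- Let u : ℝ^N → ℝ be upper semicontinuous and bounded, and for κ > 0 define the sup-convolution u^κ(x) = sup_{y ∈ ℝ^N} { u(y) - |x - y|²/(2κ²) }. If (p̄, X̄) ∈ J^{2,+} u^κ(x̄) (the second-order superjet of u^κ at x̄), then (p̄, X̄) ∈ J^{2,+} u(ȳ) where ȳ = x̄ + κ² p̄. -/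
open scoped RealInnerProductSpace

/-- `(p, X)` belongs to the second-order superjet `J^{2,+} u (x)`. -/
def Superjet {N : ℕ} (u : EuclideanSpace ℝ (Fin N) → ℝ) (x : EuclideanSpace ℝ (Fin N))
    (p : EuclideanSpace ℝ (Fin N))
    (X : EuclideanSpace ℝ (Fin N) →L[ℝ] EuclideanSpace ℝ (Fin N)) : Prop :=
  ∀ δ > (0 : ℝ), ∃ ε > (0 : ℝ), ∀ z : EuclideanSpace ℝ (Fin N), ‖z‖ ≤ ε →
    u (x + z) - u x ≤ ⟪p, z⟫ + (1 / 2) * ⟪X z, z⟫ + δ * ‖z‖ ^ 2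

set_option maxHeartbeats 1000000 in
theorem stmt_16 (N : ℕ) (κ : ℝ) (hκ : 0 < κ)
    (u : EuclideanSpace ℝ (Fin N) → ℝ) (husc : UpperSemicontinuous u)
    (hub : ∃ C, ∀ x, |u x| ≤ C)
    (pbar : EuclideanSpace ℝ (Fin N))
    (Xbar : EuclideanSpace ℝ (Fin N) →L[ℝ] EuclideanSpace ℝ (Fin N))
    (hX : IsSelfAdjoint Xbar)
    (xbar : EuclideanSpace ℝ (Fin N))
    (h : Superjet (fun x => ⨆ y, (u y - ‖x - y‖ ^ 2 / (2 * κ ^ 2))) xbar pbar Xbar) :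
    Superjet u (xbar + κ ^ 2 • pbar) pbar Xbar := by
  obtain ⟨C, hC⟩ := hub
  have hκ2 : (0 : ℝ) < 2 * κ ^ 2 := by positivity
  obtain ⟨φ, hφ⟩ : ∃ φ' : EuclideanSpace ℝ (Fin N) → EuclideanSpace ℝ (Fin N) → ℝ,
      φ' = fun x y => u y - ‖x - y‖ ^ 2 / (2 * κ ^ 2) := ⟨_, rfl⟩
  obtain ⟨v, hv⟩ : ∃ v' : EuclideanSpace ℝ (Fin N) → ℝ,
      v' = fun x => ⨆ y, φ x y := ⟨_, rfl⟩
  have h' : ∀ δ > (0 : ℝ), ∃ ε > (0 : ℝ), ∀ z : EuclideanSpace ℝ (Fin N), ‖z‖ ≤ ε →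
      v (xbar + z) - v xbar ≤ ⟪pbar, z⟫ + (1 / 2) * ⟪Xbar z, z⟫ + δ * ‖z‖ ^ 2 := by
    simp only [hv, hφ]
    exact h
  have hbdd : ∀ x, BddAbove (Set.range (φ x)) := by
    intro x
    refine ⟨C, ?_⟩
    rintro _ ⟨y, rfl⟩
    have h1 := (abs_le.1 (hC y)).2
    have h2 : 0 ≤ ‖x - y‖ ^ 2 / (2 * κ ^ 2) := by positivity
    rw [hφ]
    simp only
    linarith
  have hφle : ∀ x y, φ x y ≤ v x := by
    intro x y
    rw [hv]
    exact le_ciSup (hbdd x) y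
  have hule : ∀ x, u x ≤ v x := by
    intro x
    have h1 := hφle x x
    rw [hφ] at h1
    simpa using h1
  -- maximizing sequence
  have hSlb : -C ≤ v xbar := le_trans (abs_le.1 (hC xbar)).1 (hule xbar)
  have hseq : ∀ n : ℕ, ∃ y, v xbar - 1 / (n + 1) < φ xbar y := by
    intro n
    have hlt : v xbar - 1 / (n + 1 : ℝ) < v xbar := by
      have : (0 : ℝ) < 1 / (n + 1) := by positivity
      linarith
    rw [hv] at hlt ⊢
    exact exists_lt_of_lt_ciSup hlt
  choose y hy using hseq
  have hC0 : (0 : ℝ) ≤ C := (abs_nonneg _).trans (hC xbar)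
  obtain ⟨R, hR⟩ : ∃ R : ℝ, R = Real.sqrt (2 * κ ^ 2 * (2 * C + 1)) := ⟨_, rfl⟩
  have hR2 : R ^ 2 = 2 * κ ^ 2 * (2 * C + 1) := by
    rw [hR]; exact Real.sq_sqrt (by positivity)
  have hmem : ∀ n, y n ∈ Metric.closedBall xbar R := by
    intro n
    have h1 := hy n
    rw [hφ] at h1
    simp only at h1
    have h2 := (abs_le.1 (hC (y n))).2
    have h3 : 1 / (n + 1 : ℝ) ≤ 1 := by
      rw [div_le_one (by positivity)]; linarith [Nat.cast_nonneg (α := ℝ) n]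
    have h4 : ‖xbar - y n‖ ^ 2 / (2 * κ ^ 2) < 2 * C + 1 := by linarith
    have h5 : ‖xbar - y n‖ ^ 2 ≤ R ^ 2 := by
      rw [hR2]
      have := (div_lt_iff₀ hκ2).1 h4
      nlinarith
    have h6 : ‖xbar - y n‖ ≤ R := by
      have := Real.sqrt_le_sqrt h5
      rwa [Real.sqrt_sq (norm_nonneg _), Real.sqrt_sq (by rw [hR]; exact Real.sqrt_nonneg _)]
        at this
    rw [Metric.mem_closedBall, dist_eq_norm, ← norm_neg]
    simpa [neg_sub] using h6
  obtain ⟨yh, -, σ, hσmono, hσtend⟩ :=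
    (isCompact_closedBall xbar R).tendsto_subseq hmem
  -- upper semicontinuity of φ xbar
  have hφusc : UpperSemicontinuous (φ xbar) := by
    rw [hφ]
    have hcont : Continuous fun y : EuclideanSpace ℝ (Fin N) =>
        -(‖xbar - y‖ ^ 2 / (2 * κ ^ 2)) := by fun_prop
    have := husc.add hcont.upperSemicontinuous
    simpa [sub_eq_add_neg] using this
  -- the sup is attained at yh
  have hattain : v xbar = φ xbar yh := by
    refine le_antisymm ?_ (hφle xbar yh)
    by_contra hlt
    push_neg at hlt
    obtain ⟨a, ha⟩ : ∃ a : ℝ, a = (φ xbar yh + v xbar) / 2 := ⟨_, rfl⟩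
    have h1 : φ xbar yh < a := by rw [ha]; linarith
    have h2 : a < v xbar := by rw [ha]; linarith
    have hev : ∀ᶠ n in Filter.atTop, φ xbar (y (σ n)) < a :=
      hσtend.eventually (hφusc yh a h1)
    obtain ⟨m, hm⟩ := Filter.eventually_atTop.1 hev
    obtain ⟨k, hk⟩ := exists_nat_one_div_lt (show (0:ℝ) < v xbar - a by linarith)
    have hσn : ((m ⊔ k : ℕ) : ℝ) ≤ (σ (m ⊔ k) : ℝ) := by exact_mod_cast hσmono.le_apply
    have e1 : v xbar - 1 / (σ (m ⊔ k) + 1 : ℝ) < φ xbar (y (σ (m ⊔ k))) := hy (σ (m ⊔ k))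
    have e2 : φ xbar (y (σ (m ⊔ k))) < a := hm (m ⊔ k) (le_max_left _ _)
    have e3 : 1 / (σ (m ⊔ k) + 1 : ℝ) ≤ 1 / ((m ⊔ k : ℕ) + 1 : ℝ) := by
      apply one_div_le_one_div_of_le (by positivity); linarith
    have e4 : 1 / ((m ⊔ k : ℕ) + 1 : ℝ) ≤ 1 / (k + 1 : ℝ) := by
      apply one_div_le_one_div_of_le (by positivity)
      have : (k : ℝ) ≤ ((m ⊔ k : ℕ) : ℝ) := by exact_mod_cast le_max_right m k
      linarith
    linarith
  -- bound on the quadratic form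
  have hXb : ∀ z : EuclideanSpace ℝ (Fin N), ⟪Xbar z, z⟫ ≤ ‖Xbar‖ * ‖z‖ ^ 2 := by
    intro z
    calc ⟪Xbar z, z⟫ ≤ ‖Xbar z‖ * ‖z‖ := real_inner_le_norm _ _
    _ ≤ ‖Xbar‖ * ‖z‖ * ‖z‖ := by
        have := Xbar.le_opNorm z
        nlinarith [norm_nonneg z]
    _ = ‖Xbar‖ * ‖z‖ ^ 2 := by ring
  -- key inequality with δ = 1
  obtain ⟨ε₁, hε₁, h1⟩ := h' 1 one_pos
  obtain ⟨M, hM⟩ : ∃ M : ℝ, M = 2 * κ ^ 2 * (‖Xbar‖ / 2 + 1) + 1 := ⟨_, rfl⟩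
  have hM0 : 0 < M := by
    rw [hM]
    have : (0:ℝ) ≤ ‖Xbar‖ := norm_nonneg _
    nlinarith
  obtain ⟨q, hq⟩ : ∃ q' : EuclideanSpace ℝ (Fin N),
      q' = yh - (xbar + κ ^ 2 • pbar) := ⟨_, rfl⟩
  have hkey : ∀ z : EuclideanSpace ℝ (Fin N), ‖z‖ ≤ ε₁ → ⟪q, z⟫ ≤ M * ‖z‖ ^ 2 := by
    intro z hz
    have hlow : φ (xbar + z) yh ≤ v (xbar + z) := hφle _ _
    have hup := h1 z hz
    have hφz : φ (xbar + z) yh = u yh - ‖xbar + z - yh‖ ^ 2 / (2 * κ ^ 2) := by rw [hφ]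
    have hexp : ‖xbar + z - yh‖ ^ 2 = ‖xbar - yh‖ ^ 2 + 2 * ⟪xbar - yh, z⟫ + ‖z‖ ^ 2 := by
      rw [show xbar + z - yh = (xbar - yh) + z by abel, norm_add_sq_real]
    have hvx : v xbar = u yh - ‖xbar - yh‖ ^ 2 / (2 * κ ^ 2) := by rw [hattain, hφ]
    have hqz : ⟪q, z⟫ = -⟪xbar - yh, z⟫ - κ ^ 2 * ⟪pbar, z⟫ := by
      rw [hq]
      simp only [inner_sub_left, inner_add_left, real_inner_smul_left]
      ring
    have key0 : u yh - ‖xbar + z - yh‖ ^ 2 / (2 * κ ^ 2) - v xbar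
        ≤ ⟪pbar, z⟫ + 1 / 2 * ⟪Xbar z, z⟫ + 1 * ‖z‖ ^ 2 := by
      rw [← hφz]
      linarith
    rw [hvx, hexp] at key0
    have he : u yh - (‖xbar - yh‖ ^ 2 + 2 * ⟪xbar - yh, z⟫ + ‖z‖ ^ 2) / (2 * κ ^ 2)
        - (u yh - ‖xbar - yh‖ ^ 2 / (2 * κ ^ 2))
        = -(2 * ⟪xbar - yh, z⟫ + ‖z‖ ^ 2) / (2 * κ ^ 2) := by ring
    rw [he] at key0
    have h4 : -(2 * ⟪xbar - yh, z⟫ + ‖z‖ ^ 2)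
        ≤ (⟪pbar, z⟫ + 1 / 2 * ⟪Xbar z, z⟫ + 1 * ‖z‖ ^ 2) * (2 * κ ^ 2) :=
      (div_le_iff₀ hκ2).1 key0
    have h5 := hXb z
    rw [hqz, hM]
    nlinarith [mul_le_mul_of_nonneg_left h5 (le_of_lt (by positivity : (0:ℝ) < κ ^ 2)),
      sq_nonneg ‖z‖, mul_nonneg (mul_nonneg (sq_nonneg κ) (norm_nonneg Xbar)) (sq_nonneg ‖z‖),
      mul_nonneg (sq_nonneg κ) (sq_nonneg ‖z‖)]
  -- conclude q = 0
  have hq0 : q = 0 := by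
    by_contra hqne
    have hqn : 0 < ‖q‖ := norm_pos_iff.2 hqne
    obtain ⟨t, ht⟩ : ∃ t : ℝ, t = min (ε₁ / ‖q‖) (1 / (2 * M)) := ⟨_, rfl⟩
    have ht0 : 0 < t := by
      rw [ht]; exact lt_min (by positivity) (by positivity)
    have htl : t ≤ ε₁ / ‖q‖ := by rw [ht]; exact min_le_left _ _
    have hts : t ≤ 1 / (2 * M) := by rw [ht]; exact min_le_right _ _
    have htz : ‖t • q‖ ≤ ε₁ := by
      rw [norm_smul, Real.norm_eq_abs, abs_of_pos ht0]
      calc t * ‖q‖ ≤ ε₁ / ‖q‖ * ‖q‖ := by nlinarith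
      _ = ε₁ := by field_simp
    have hmain := hkey (t • q) htz
    rw [real_inner_smul_right, real_inner_self_eq_norm_sq, norm_smul,
      Real.norm_eq_abs, abs_of_pos ht0] at hmain
    -- hmain : t * ‖q‖ ^ 2 ≤ M * (t * ‖q‖) ^ 2
    have h7 : 1 ≤ M * t := by
      nlinarith [mul_pos ht0 (pow_pos hqn 2)]
    have h8 : M * t ≤ 1 / 2 := by
      have e : M * (1 / (2 * M)) = 1 / 2 := by field_simp
      calc M * t ≤ M * (1 / (2 * M)) := mul_le_mul_of_nonneg_left hts hM0.le
      _ = 1 / 2 := e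
    linarith
  have hyh : yh = xbar + κ ^ 2 • pbar := by
    rw [hq] at hq0
    exact sub_eq_zero.1 hq0
  -- final argument
  intro δ hδ
  obtain ⟨ε, hε, hz⟩ := h' δ hδ
  refine ⟨ε, hε, fun z hzn => ?_⟩
  have hlow : φ (xbar + z) (yh + z) ≤ v (xbar + z) := hφle _ _
  have hnorm : xbar + z - (yh + z) = xbar - yh := by abel
  have hφval : φ (xbar + z) (yh + z) = u (yh + z) - ‖xbar - yh‖ ^ 2 / (2 * κ ^ 2) := by
    rw [hφ]
    simp only
    rw [hnorm]
  have hvx : v xbar = u yh - ‖xbar - yh‖ ^ 2 / (2 * κ ^ 2) := by rw [hattain, hφ]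
  have hup := hz z hzn
  rw [hvx] at hup
  rw [← hyh]
  have hfin : u (yh + z) - ‖xbar - yh‖ ^ 2 / (2 * κ ^ 2) ≤ v (xbar + z) := by
    rw [← hφval]; exact hlow
  linarith
end
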